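/- arXiv:2209.12631 — 5 statements merged into one kernel-verified Lean document; each statement's English description precedes it below -/
import Mathlib

section
/- For all integers t ≥ 2 and r_1 ≥ r_2 ≥ ... ≥ r_t ≥ 1 with r_1 ≥ 2, the complete multipartite graph K_{r_1,...,r_t} satisfies mob(K_{r_1,...,r_t}) = max{2, t−1}. -/
/-!
In a complete multipartite graph two vertices are at distance 1 if they lie in different parts
and at distance 2 otherwise, so a set is in general position exactly when it lies inside one
part or meets every part at most once. A set with at least three robots and at least as many
robots as parts therefore admits no legal move, so if it were mobile it would be the whole
vertex set, which is not in general position when some part has two vertices. Conversely, two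
robots in different parts can visit every vertex, and so can one robot in each part but one:
to sweep the part of a robot, that robot first steps into the free part.
-/

/-- `S` is a general position set of `G`: no three distinct vertices of `S`
lie on a common shortest path. -/
def IsGPSet {V : Type*} (G : SimpleGraph V) (S : Finset V) : Prop :=
  ∀ x ∈ S, ∀ y ∈ S, ∀ z ∈ S, x ≠ y → y ≠ z → x ≠ z →
    G.dist x y + G.dist y z ≠ G.dist x z

/-- A legal move: one robot moves from an occupied vertex `u` to an adjacent
unoccupied vertex `v` so that the new set of occupied vertices is again in
general position. -/
def LegalMove {V : Type*} [DecidableEq V] (G : SimpleGraph V) (S T : Finset V) : Prop :=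
  ∃ u ∈ S, ∃ v, v ∉ S ∧ G.Adj u v ∧ T = insert v (S.erase u) ∧ IsGPSet G T

/-- `S` is a mobile general position set of `G`: `S` is in general position and
there is a finite sequence of legal moves starting from `S` after which every
vertex of `G` has been occupied at some stage. -/
def IsMobileGPSet {V : Type*} [DecidableEq V] (G : SimpleGraph V) (S : Finset V) : Prop :=
  IsGPSet G S ∧ ∃ (m : ℕ) (f : ℕ → Finset V), f 0 = S ∧
    (∀ i < m, LegalMove G (f i) (f (i + 1))) ∧
    ∀ v : V, ∃ i ≤ m, v ∈ f i

/-- The mobile general position number of `G`. -/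
noncomputable def mob {V : Type*} [DecidableEq V] (G : SimpleGraph V) : ℕ :=
  sSup {n | ∃ S : Finset V, IsMobileGPSet G S ∧ S.card = n}

/-- The general position number of `G`. -/
noncomputable def gpNum {V : Type*} (G : SimpleGraph V) : ℕ :=
  sSup {n | ∃ S : Finset V, IsGPSet G S ∧ S.card = n}

section

variable {V : Type*} [DecidableEq V] {G : SimpleGraph V}

theorem isGPSet_of_card_le_two {S : Finset V} (h : S.card ≤ 2) : IsGPSet G S := by
  intro x hx y hy z hz hxy hyz hxz
  have hsub : ({x, y, z} : Finset V) ⊆ S := by simp [Finset.insert_subset_iff, hx, hy, hz]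
  have := Finset.card_le_card hsub
  rw [Finset.card_eq_three.mpr ⟨x, y, z, hxy, hxz, hyz, rfl⟩] at this
  omega

theorem LegalMove.reverse {S T : Finset V} (h : LegalMove G S T) (hS : IsGPSet G S) :
    LegalMove G T S := by
  obtain ⟨u, hu, v, hv, hadj, rfl, -⟩ := h
  refine ⟨v, Finset.mem_insert_self _ _, u, by simp [hadj.ne], hadj.symm, ?_, hS⟩
  rw [Finset.erase_insert (fun h => hv (Finset.mem_of_mem_erase h)), Finset.insert_erase hu]

theorem IsMobileGPSet.mem_of_forall_not_legalMove {S : Finset V} (hS : IsMobileGPSet G S)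
    (hstuck : ∀ T, ¬ LegalMove G S T) (v : V) : v ∈ S := by
  obtain ⟨-, m, f, h0, hmove, hcover⟩ := hS
  obtain ⟨i, hi, hv⟩ := hcover v
  rcases Nat.eq_zero_or_pos i with rfl | hpos
  · rwa [h0] at hv
  · exact absurd (h0 ▸ hmove 0 (by omega)) (hstuck _)

/-- `Sweep G S T A`: a sequence of legal moves leads from `S` to `T`, and every vertex of `A`
is occupied at some stage. -/
inductive Sweep (G : SimpleGraph V) : Finset V → Finset V → Set V → Prop
  | nil {S : Finset V} {A : Set V} : A ⊆ S → Sweep G S S A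
  | cons {S T U : Finset V} {A B : Set V} :
      LegalMove G S T → Sweep G T U A → B ⊆ S ∪ A → Sweep G S U B

namespace Sweep

variable {S T U : Finset V} {A B : Set V}

theorem mono (h : Sweep G S T A) (hBA : B ⊆ A) : Sweep G S T B := by
  cases h with
  | nil hA => exact nil (hBA.trans hA)
  | cons hmove hrest hA => exact cons hmove hrest (hBA.trans hA)

theorem union_start (h : Sweep G S T A) : Sweep G S T (S ∪ A) := by
  cases h with
  | nil hA => exact nil (Set.union_subset subset_rfl hA)
  | cons hmove hrest hA => exact cons hmove hrest (Set.union_subset Set.subset_union_left hA)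

theorem trans (h₁ : Sweep G S T A) (h₂ : Sweep G T U B) : Sweep G S U (A ∪ B) := by
  induction h₁ with
  | nil hA => exact h₂.union_start.mono (Set.union_subset_union_left _ hA)
  | cons hmove _ hA ih =>
    refine cons hmove (ih h₂) ?_
    rw [← Set.union_assoc]
    exact Set.union_subset_union_left _ hA

theorem detour (hS : IsGPSet G S) (hmove : LegalMove G S T) (h : Sweep G T T A) :
    Sweep G S S (S ∪ A) :=
  cons hmove (h.trans (cons (hmove.reverse hS) (nil (A := ∅) (Set.empty_subset _))
    (Set.empty_subset _))) (by simp)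

theorem biUnion {ι : Type*} (s : Finset ι) {F : ι → Set V} (h : ∀ i ∈ s, Sweep G S S (F i)) :
    Sweep G S S (⋃ i ∈ s, F i) := by
  classical
  induction s using Finset.induction_on with
  | empty => exact nil (by simp)
  | insert a s _ ih =>
    refine ((h a (Finset.mem_insert_self a s)).trans
      (ih fun i hi => h i (Finset.mem_insert_of_mem hi))).mono ?_
    rw [Finset.set_biUnion_insert]

theorem exists_seq (h : Sweep G S T A) : ∃ (m : ℕ) (f : ℕ → Finset V), f 0 = S ∧
    (∀ i < m, LegalMove G (f i) (f (i + 1))) ∧ ∀ v ∈ A, ∃ i ≤ m, v ∈ f i := by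
  induction h with
  | @nil S A hA => exact ⟨0, fun _ => S, rfl, by simp, fun v hv => ⟨0, le_rfl, hA hv⟩⟩
  | @cons S T U A B hmove _ hB ih =>
    obtain ⟨m, f, h0, hf, hA⟩ := ih
    refine ⟨m + 1, fun | 0 => S | i + 1 => f i, rfl, ?_, ?_⟩
    · rintro (_ | i) hi
      · simpa [h0] using hmove
      · exact hf i (by omega)
    · intro v hv
      rcases hB hv with hv | hv
      · exact ⟨0, by omega, hv⟩
      · obtain ⟨i, hi, hvi⟩ := hA v hv
        exact ⟨i + 1, by omega, hvi⟩

theorem isMobileGPSet (h : Sweep G S T A) (hS : IsGPSet G S) (hA : ∀ v, v ∈ A) :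
    IsMobileGPSet G S := by
  obtain ⟨m, f, h0, hf, hcover⟩ := h.exists_seq
  exact ⟨hS, m, f, h0, hf, fun v => hcover v (hA v)⟩

end Sweep

/-- Any two vertices are in general position, so each robot of a pair may visit its
neighbours freely. -/
theorem isMobileGPSet_pair [Fintype V] {a b : V}
    (hadj : ∀ w, w ≠ a → w ≠ b → G.Adj a w ∨ G.Adj b w) : IsMobileGPSet G {a, b} := by
  set S : Finset V := {a, b}
  have hS : S.card ≤ 2 := Finset.card_le_two
  have hvisit : ∀ u ∈ S, ∀ w ∉ S, G.Adj u w → Sweep G S S {w} := by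
    intro u hu w hw huw
    have hT : (insert w (S.erase u)).card ≤ 2 := by
      have := Finset.card_insert_le w (S.erase u)
      have := Finset.card_erase_of_mem hu
      omega
    refine (Sweep.detour (isGPSet_of_card_le_two hS)
      ⟨u, hu, w, hw, huw, rfl, isGPSet_of_card_le_two hT⟩ (Sweep.nil subset_rfl)).mono ?_
    simp
  refine (Sweep.biUnion Finset.univ (F := fun w => {w}) fun w _ => ?_).isMobileGPSet
    (isGPSet_of_card_le_two hS) (by simp)
  by_cases hw : w ∈ S
  · exact Sweep.nil (by simpa using hw)
  · have hwa : w ≠ a := fun h => hw (by simp [S, h])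
    have hwb : w ≠ b := fun h => hw (by simp [S, h])
    rcases hadj w hwa hwb with h | h
    · exact hvisit a (by simp [S]) w hw h
    · exact hvisit b (by simp [S]) w hw h

end

namespace SimpleGraph.completeMultipartiteGraph

variable {ι : Type*} {V : ι → Type*}

theorem dist_eq_one {x y : Σ i, V i} (h : x.1 ≠ y.1) :
    (completeMultipartiteGraph V).dist x y = 1 :=
  dist_eq_one_iff_adj.mpr h

theorem dist_eq_two {x y z : Σ i, V i} (hxz : x ≠ z) (h : x.1 = z.1) (hy : y.1 ≠ x.1) :
    (completeMultipartiteGraph V).dist x z = 2 := by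
  rw [dist, ENat.toNat_eq_iff two_ne_zero, Nat.cast_two, edist_eq_two_iff]
  exact ⟨hxz, fun hadj => hadj h, y, Ne.symm hy, fun e => hy (e.symm.trans h.symm)⟩

theorem not_isGPSet_of_mem {S : Finset (Σ i, V i)} {x y z : Σ i, V i} (hx : x ∈ S) (hy : y ∈ S)
    (hz : z ∈ S) (hxz : x ≠ z) (h : x.1 = z.1) (hyx : y.1 ≠ x.1) :
    ¬ IsGPSet (completeMultipartiteGraph V) S := fun hS => by
  have := hS x hx y hy z hz (by rintro rfl; exact hyx rfl) (by rintro rfl; exact hyx h.symm) hxz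
  rw [dist_eq_one (Ne.symm hyx), dist_eq_one (h ▸ hyx), dist_eq_two hxz h hyx] at this
  exact this rfl

theorem isGPSet_of_injOn {S : Finset (Σ i, V i)} (h : Set.InjOn Sigma.fst (S : Set (Σ i, V i))) :
    IsGPSet (completeMultipartiteGraph V) S := by
  intro x hx y hy z hz hxy hyz hxz
  rw [dist_eq_one (mt (h hx hy) hxy), dist_eq_one (mt (h hy hz) hyz),
    dist_eq_one (mt (h hx hz) hxz)]
  omega

theorem card_le_of_injOn [Fintype ι] {S : Finset (Σ i, V i)}
    (h : Set.InjOn Sigma.fst (S : Set (Σ i, V i))) : S.card ≤ Fintype.card ι :=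
  Finset.card_le_card_of_injOn Sigma.fst (fun _ _ => Finset.mem_univ _) h

variable [DecidableEq (Σ i, V i)]

theorem not_legalMove [Fintype ι] {S T : Finset (Σ i, V i)}
    (hS : IsGPSet (completeMultipartiteGraph V) S) (h3 : 3 ≤ S.card)
    (hι : Fintype.card ι ≤ S.card) : ¬ LegalMove (completeMultipartiteGraph V) S T := by
  rintro ⟨u, hu, v, hv, huv, rfl, hT⟩
  by_cases hinj : Set.InjOn Sigma.fst (S : Set (Σ i, V i))
  · obtain ⟨w, hw, hwv⟩ : ∃ w ∈ S, w.1 = v.1 := by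
      by_contra! hfree
      have := card_le_of_injOn (S := insert v S) (by
        rw [Finset.coe_insert, Set.injOn_insert (by simpa using hv)]
        exact ⟨hinj, fun ⟨w, hw, hwv⟩ => hfree w hw hwv⟩)
      rw [Finset.card_insert_of_notMem hv] at this
      omega
    have hwu : w ≠ u := by rintro rfl; exact huv hwv
    obtain ⟨y, hy, hywu⟩ := Finset.exists_mem_notMem_of_card_lt_card
      (s := {w, u}) (lt_of_lt_of_le (Finset.card_le_two.trans_lt (by norm_num)) h3)
    simp only [Finset.mem_insert, Finset.mem_singleton, not_or] at hywu
    refine not_isGPSet_of_mem (x := w) (y := y) (z := v) ?_ ?_ (Finset.mem_insert_self _ _)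
      (by rintro rfl; exact hv hw) hwv (fun h => hywu.1 (hinj hy hw h)) hT
    · exact Finset.mem_insert_of_mem (Finset.mem_erase.mpr ⟨hwu, hw⟩)
    · exact Finset.mem_insert_of_mem (Finset.mem_erase.mpr ⟨hywu.2, hy⟩)
  · simp only [Set.InjOn, Finset.mem_coe, not_forall] at hinj
    obtain ⟨x, hx, z, hz, hxz, hne⟩ := hinj
    have hpart : ∀ y ∈ S, y.1 = x.1 := fun y hy => by
      by_contra hyx
      exact not_isGPSet_of_mem hx hy hz hne hxz hyx hS
    obtain ⟨a, ha, b, hb, hab⟩ := Finset.one_lt_card.mp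
      (show 1 < (S.erase u).card by rw [Finset.card_erase_of_mem hu]; omega)
    have hpart' : ∀ y ∈ S.erase u, y.1 = x.1 := fun y hy => hpart y (Finset.mem_of_mem_erase hy)
    refine not_isGPSet_of_mem (Finset.mem_insert_of_mem ha) (Finset.mem_insert_self v _)
      (Finset.mem_insert_of_mem hb) hab ((hpart' a ha).trans (hpart' b hb).symm) ?_ hT
    rw [hpart' a ha, ← hpart u hu]
    exact Ne.symm huv

theorem card_le_of_isMobileGPSet [Fintype ι] {i j : ι} (hij : i ≠ j) [Nontrivial (V i)]
    [Nonempty (V j)] {S : Finset (Σ i, V i)}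
    (hS : IsMobileGPSet (completeMultipartiteGraph V) S) :
    S.card ≤ max 2 (Fintype.card ι - 1) := by
  by_contra! hlarge
  have hall := hS.mem_of_forall_not_legalMove fun _ =>
    not_legalMove hS.1 (by omega) (by omega)
  obtain ⟨a, b, hab⟩ := exists_pair_ne (V i)
  exact not_isGPSet_of_mem (x := ⟨i, a⟩) (y := ⟨j, Classical.arbitrary _⟩) (z := ⟨i, b⟩)
    (hall _) (hall _) (hall _) (by simp [hab]) rfl (Ne.symm hij) hS.1

theorem exists_isMobileGPSet_card_two [Fintype (Σ i, V i)] {i j : ι} (hij : i ≠ j)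
    (a : V i) (b : V j) :
    ∃ S : Finset (Σ i, V i), IsMobileGPSet (completeMultipartiteGraph V) S ∧ S.card = 2 := by
  refine ⟨{⟨i, a⟩, ⟨j, b⟩}, isMobileGPSet_pair fun w _ _ => ?_, ?_⟩
  · by_cases hw : w.1 = i
    · exact Or.inr (hw ▸ Ne.symm hij : j ≠ w.1)
    · exact Or.inl (Ne.symm hw)
  · exact Finset.card_pair (by simp [hij])

section

variable {S : Finset (Σ i, V i)}

theorem injOn_insert_erase (hS : Set.InjOn Sigma.fst (S : Set (Σ i, V i))) {x : Σ i, V i}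
    (hx : ∀ y ∈ S, y.1 ≠ x.1) (u : Σ i, V i) :
    Set.InjOn Sigma.fst ((insert x (S.erase u) : Finset (Σ i, V i)) : Set (Σ i, V i)) := by
  rw [Finset.coe_insert, Set.injOn_insert (fun h => hx x (Finset.mem_of_mem_erase h) rfl)]
  exact ⟨hS.mono (Finset.coe_subset.mpr (Finset.erase_subset u S)),
    fun ⟨y, hy, hyx⟩ => hx y (Finset.mem_of_mem_erase hy) hyx⟩

theorem legalMove_of_free (hS : Set.InjOn Sigma.fst (S : Set (Σ i, V i))) {u x : Σ i, V i}
    (hu : u ∈ S) (hx : ∀ y ∈ S, y.1 ≠ x.1) :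
    LegalMove (completeMultipartiteGraph V) S (insert x (S.erase u)) :=
  ⟨u, hu, x, fun h => hx x h rfl, hx u hu, rfl, isGPSet_of_injOn (injOn_insert_erase hS hx u)⟩

theorem sweep_part [Fintype (Σ i, V i)] (hS : Set.InjOn Sigma.fst (S : Set (Σ i, V i)))
    {u : Σ i, V i} (hu : u ∈ S) {i : ι} (hfree : ∀ y ∈ S, y.1 ≠ i) :
    Sweep (completeMultipartiteGraph V) S S {w | w.1 = i} := by
  classical
  refine (Sweep.biUnion (Finset.univ.filter fun w : Σ i, V i => w.1 = i) (F := fun w => {w})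
    fun w hw => ?_).mono fun w hw => by simpa using hw
  have hwi : w.1 = i := (Finset.mem_filter.mp hw).2
  exact (Sweep.detour (isGPSet_of_injOn hS) (legalMove_of_free hS hu (hwi ▸ hfree))
    (Sweep.nil subset_rfl)).mono (by simp)

/-- The robot at `u` steps into the free part of `x`, so that its own part becomes free and
can be swept from there. -/
theorem sweep_own_part [Fintype (Σ i, V i)] (hS : Set.InjOn Sigma.fst (S : Set (Σ i, V i)))
    {u x : Σ i, V i} (hu : u ∈ S) (hx : ∀ y ∈ S, y.1 ≠ x.1) :
    Sweep (completeMultipartiteGraph V) S S {w | w.1 = u.1} := by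
  have hfree : ∀ y ∈ insert x (S.erase u), y.1 ≠ u.1 := by
    intro y hy
    rcases Finset.mem_insert.mp hy with rfl | hy
    · exact Ne.symm (hx u hu)
    · exact fun h => Finset.ne_of_mem_erase hy (hS (Finset.mem_of_mem_erase hy) hu h)
  exact (Sweep.detour (isGPSet_of_injOn hS) (legalMove_of_free hS hu hx)
    (sweep_part (injOn_insert_erase hS hx u) (Finset.mem_insert_self x _) hfree)).mono
    Set.subset_union_right

end

/-- One robot in every part but `i`. -/
theorem exists_isMobileGPSet_card_pred [Fintype ι] [∀ i, Fintype (V i)] [∀ i, Nonempty (V i)]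
    {i j : ι} (hij : i ≠ j) :
    ∃ S : Finset (Σ i, V i), IsMobileGPSet (completeMultipartiteGraph V) S ∧
      S.card = Fintype.card ι - 1 := by
  classical
  let v : ι → Σ i, V i := fun k => ⟨k, Classical.arbitrary _⟩
  have hv : Function.Injective v := fun k l h => congrArg Sigma.fst h
  set S := (Finset.univ.erase i).image v
  have hS : Set.InjOn Sigma.fst (S : Set (Σ i, V i)) := by
    rintro _ hx _ hy h
    obtain ⟨k, -, rfl⟩ := Finset.mem_image.mp hx
    obtain ⟨l, -, rfl⟩ := Finset.mem_image.mp hy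
    exact congrArg v h
  have hfree : ∀ y ∈ S, y.1 ≠ (v i).1 := by
    intro y hy
    obtain ⟨k, hk, rfl⟩ := Finset.mem_image.mp hy
    exact Finset.ne_of_mem_erase hk
  refine ⟨S, (Sweep.biUnion Finset.univ (F := fun k => {w : Σ i, V i | w.1 = k})
    fun k _ => ?_).isMobileGPSet (isGPSet_of_injOn hS) (by simp), ?_⟩
  · by_cases hk : k = i
    · subst hk
      exact sweep_part hS (u := v j) (Finset.mem_image_of_mem v (by simpa using hij.symm)) hfree
    · exact sweep_own_part hS (u := v k) (Finset.mem_image_of_mem v (by simpa using hk)) hfree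
  · rw [Finset.card_image_of_injective _ hv, Finset.card_erase_of_mem (Finset.mem_univ _),
      Finset.card_univ]

end SimpleGraph.completeMultipartiteGraph

open SimpleGraph.completeMultipartiteGraph

/-- For `t ≥ 2` and `r 0 ≥ r 1 ≥ ⋯ ≥ r (t-1) ≥ 1` with `r 0 ≥ 2`, the complete
multipartite graph `K_{r_1,…,r_t}` satisfies `mob = max {2, t - 1}`. -/
theorem stmt1 (t : ℕ) (ht : 2 ≤ t) (r : Fin t → ℕ)
    (hpos : ∀ i, 1 ≤ r i) (h2 : 2 ≤ r ⟨0, by omega⟩) :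
    mob (SimpleGraph.completeMultipartiteGraph (fun i : Fin t => Fin (r i))) =
      max 2 (t - 1) := by
  let i₀ : Fin t := ⟨0, by omega⟩
  let i₁ : Fin t := ⟨1, by omega⟩
  have hne : i₀ ≠ i₁ := by simp [i₀, i₁, Fin.ext_iff]
  have : ∀ i, Nonempty (Fin (r i)) := fun i => ⟨⟨0, hpos i⟩⟩
  have : Nontrivial (Fin (r i₀)) := Fin.nontrivial_iff_two_le.mpr h2
  refine IsGreatest.csSup_eq ⟨?_, fun n ⟨S, hS, hn⟩ => by
    simpa [hn] using card_le_of_isMobileGPSet hne hS⟩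
  rcases le_total 2 (t - 1) with h | h
  · obtain ⟨S, hS, hcard⟩ := exists_isMobileGPSet_card_pred hne (V := fun i => Fin (r i))
    exact ⟨S, hS, by simp [hcard, h]⟩
  · obtain ⟨S, hS, hcard⟩ := exists_isMobileGPSet_card_two (V := fun i => Fin (r i)) hne
      ⟨0, hpos i₀⟩ ⟨0, hpos i₁⟩
    exact ⟨S, hS, by simp [hcard, h]⟩
end

section
/- For all integers a, b with 2 ≤ a ≤ b, there exists a connected simple graph G with mob(G) = a and gp(G) = b. -/
/-!
For `a = b` the complete graph `K_a` works: every set is in general position there.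
For `a < b` take the complete split graph, a clique `K_a` joined to an independent set of `b`
vertices. A set in general position either avoids the clique or meets the independent set at
most once, so `gp = b`. The clique is mobile, since any of its robots can step out to an
independent vertex and back. A larger general position set cannot move at all: with at least
three robots on independent vertices, a robot stepping into the clique becomes the middle of a
geodesic between two of the others; with the whole clique plus one independent vertex occupied,
a robot can only step out to a second independent vertex, and that vertex, the first one and a
remaining clique robot lie on a geodesic.
-/

open Finset SimpleGraph

section Mobility

variable {V : Type*} [DecidableEq V] {G : SimpleGraph V} {S T : Finset V}

theorem LegalMove.symm (hS : IsGPSet G S) (h : LegalMove G S T) : LegalMove G T S := by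
  obtain ⟨u, hu, v, hv, huv, rfl, -⟩ := h
  refine ⟨v, mem_insert_self _ _, u, by simp [huv.ne], huv.symm, ?_, hS⟩
  rw [erase_insert fun h => hv (mem_of_mem_erase h), insert_erase hu]

theorem not_isMobileGPSet_of_forall_not_legalMove (hstuck : ∀ T, ¬ LegalMove G S T) {v : V}
    (hv : v ∉ S) : ¬ IsMobileGPSet G S := by
  rintro ⟨-, m, f, rfl, hmove, hcover⟩
  obtain ⟨i, hi, hvi⟩ := hcover v
  obtain rfl | hi0 := i.eq_zero_or_pos
  · exact hv hvi
  · exact hstuck _ (hmove 0 (hi0.trans_le hi))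

theorem isMobileGPSet_of_forall_legalMove [Fintype V] (hS : IsGPSet G S)
    (hvisit : ∀ v ∉ S, ∃ T, v ∈ T ∧ LegalMove G S T) : IsMobileGPSet G S := by
  choose! T hvT hST using hvisit
  set l := (univ.filter (· ∉ S)).toList
  have hl : ∀ v ∈ l, v ∉ S := by simp [l]
  -- Even stages are `S`; stage `2 k + 1` is the round trip's visit to `l[k]`.
  let f : ℕ → Finset V := fun i => if i % 2 = 1 then l[i / 2]?.elim S T else S
  refine ⟨hS, 2 * l.length, f, rfl, fun i hi => ?_, fun v => ?_⟩
  · have hlt : i / 2 < l.length := by omega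
    have hmove := hST _ (hl _ (l.getElem_mem hlt))
    rcases i.mod_two_eq_zero_or_one with h | h
    · have h' : (i + 1) / 2 = i / 2 := by omega
      simpa [f, h, Nat.succ_mod_two_eq_one_iff.2 h, h', hlt] using hmove
    · simpa [f, h, Nat.succ_mod_two_eq_zero_iff.2 h, hlt] using hmove.symm hS
  · by_cases hv : v ∈ S
    · exact ⟨0, Nat.zero_le _, hv⟩
    obtain ⟨k, hk, rfl⟩ := List.getElem_of_mem (show v ∈ l by simp [l, hv])
    have h : (2 * k + 1) / 2 = k := by omega
    exact ⟨2 * k + 1, by omega, by simpa [f, h, hk] using hvT _ (hl _ (l.getElem_mem hk))⟩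

end Mobility

theorem gpNum_eq_of_forall_card_le {V : Type*} {G : SimpleGraph V} {n : ℕ}
    (hS : ∃ S : Finset V, IsGPSet G S ∧ #S = n) (hle : ∀ S, IsGPSet G S → #S ≤ n) :
    gpNum G = n :=
  IsGreatest.csSup_eq ⟨hS, by rintro _ ⟨S, hS, rfl⟩; exact hle S hS⟩

theorem mob_eq_of_forall_card_le {V : Type*} [DecidableEq V] {G : SimpleGraph V} {n : ℕ}
    (hS : ∃ S : Finset V, IsMobileGPSet G S ∧ #S = n)
    (hle : ∀ S, IsMobileGPSet G S → #S ≤ n) :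
    mob G = n :=
  IsGreatest.csSup_eq ⟨hS, by rintro _ ⟨S, hS, rfl⟩; exact hle S hS⟩

section Univ

variable {V : Type*} [Fintype V] {G : SimpleGraph V}

theorem gpNum_eq_card_of_isGPSet_univ (h : IsGPSet G univ) : gpNum G = Fintype.card V :=
  gpNum_eq_of_forall_card_le ⟨univ, h, card_univ⟩ fun S _ => card_le_univ S

theorem mob_eq_card_of_isGPSet_univ [DecidableEq V] (h : IsGPSet G univ) :
    mob G = Fintype.card V :=
  mob_eq_of_forall_card_le
    ⟨univ, isMobileGPSet_of_forall_legalMove h fun v hv => absurd (mem_univ v) hv, card_univ⟩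
    fun S _ => card_le_univ S

end Univ

theorem isGPSet_top {V : Type*} (S : Finset V) : IsGPSet (⊤ : SimpleGraph V) S := by
  intro x _ y _ z _ hxy hyz hxz
  simp [dist_top_of_ne hxy, dist_top_of_ne hyz, dist_top_of_ne hxz]

def completeSplitGraph (a b : ℕ) : SimpleGraph (Fin a ⊕ Fin b) where
  Adj x y := x ≠ y ∧ (x.isLeft ∨ y.isLeft)
  symm := ⟨fun _ _ h => ⟨h.1.symm, h.2.symm⟩⟩
  loopless := ⟨fun _ h => h.1 rfl⟩

section CompleteSplitGraph

variable {a b : ℕ} {S : Finset (Fin a ⊕ Fin b)}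

@[simp]
theorem completeSplitGraph_adj {x y : Fin a ⊕ Fin b} :
    (completeSplitGraph a b).Adj x y ↔ x ≠ y ∧ (x.isLeft ∨ y.isLeft) :=
  Iff.rfl

theorem completeSplitGraph_connected (ha : 0 < a) : (completeSplitGraph a b).Connected := by
  have hub (x : Fin a ⊕ Fin b) : (completeSplitGraph a b).Reachable (.inl ⟨0, ha⟩) x := by
    by_cases h : .inl ⟨0, ha⟩ = x
    · exact h ▸ .refl _
    · exact Adj.reachable ⟨h, Or.inl rfl⟩
  exact (connected_iff _).2 ⟨fun x y => (hub x).symm.trans (hub y), ⟨.inl ⟨0, ha⟩⟩⟩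

theorem completeSplitGraph_dist_inl {i : Fin a} {x : Fin a ⊕ Fin b} (h : .inl i ≠ x) :
    (completeSplitGraph a b).dist (.inl i) x = 1 :=
  dist_eq_one_iff_adj.2 ⟨h, Or.inl rfl⟩

theorem completeSplitGraph_dist_inl_right {i : Fin a} {x : Fin a ⊕ Fin b} (h : x ≠ .inl i) :
    (completeSplitGraph a b).dist x (.inl i) = 1 :=
  dist_eq_one_iff_adj.2 ⟨h, Or.inr rfl⟩

theorem completeSplitGraph_dist_inr_inr (ha : 0 < a) {j k : Fin b} (h : j ≠ k) :
    (completeSplitGraph a b).dist (.inr j) (.inr k) = 2 := by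
  have hconn := completeSplitGraph_connected (b := b) ha
  have hle := hconn.dist_triangle (u := .inr j) (v := .inl ⟨0, ha⟩) (w := .inr k)
  rw [completeSplitGraph_dist_inl (by simp), completeSplitGraph_dist_inl_right (by simp)] at hle
  have hpos := hconn.pos_dist_of_ne (u := .inr j) (v := .inr k) (by simpa using h)
  have hne : (completeSplitGraph a b).dist (.inr j) (.inr k) ≠ 1 := by
    rw [Ne, dist_eq_one_iff_adj]
    simp
  omega

theorem isGPSet_completeSplitGraph_iff (ha : 0 < a) :
    IsGPSet (completeSplitGraph a b) S ↔
      ∀ i j k, .inl i ∈ S → .inr j ∈ S → .inr k ∈ S → j = k := by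
  have hconn := completeSplitGraph_connected (b := b) ha
  constructor
  · intro hS i j k hi hj hk
    by_contra hjk
    refine hS _ hj _ hi _ hk (by simp) (by simp) (by simpa using hjk) ?_
    rw [completeSplitGraph_dist_inl_right (by simp), completeSplitGraph_dist_inl (by simp),
      completeSplitGraph_dist_inr_inr ha hjk]
  · intro h x hx y hy z hz hxy hyz hxz
    have hxy' := hconn.pos_dist_of_ne hxy
    have hyz' := hconn.pos_dist_of_ne hyz
    rcases x with i | j
    · rw [completeSplitGraph_dist_inl hxy, completeSplitGraph_dist_inl hxz]
      omega
    rcases z with i | k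
    · rw [completeSplitGraph_dist_inl_right hxz, completeSplitGraph_dist_inl_right hyz]
      omega
    have hjk : j ≠ k := by simpa using hxz
    rcases y with i | l
    · exact absurd (h i j k hy hx hz) hjk
    · rw [completeSplitGraph_dist_inr_inr ha hjk,
        completeSplitGraph_dist_inr_inr ha (by simpa using hxy)]
      omega

theorem IsGPSet.toLeft_eq_empty_or_card_toRight_le_one (ha : 0 < a)
    (hS : IsGPSet (completeSplitGraph a b) S) : S.toLeft = ∅ ∨ #S.toRight ≤ 1 := by
  rcases S.toLeft.eq_empty_or_nonempty with h | ⟨i, hi⟩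
  · exact .inl h
  · refine .inr (card_le_one.2 fun j hj k hk => ?_)
    exact (isGPSet_completeSplitGraph_iff ha).1 hS i j k (mem_toLeft.1 hi) (mem_toRight.1 hj)
      (mem_toRight.1 hk)

theorem gpNum_completeSplitGraph (ha : 0 < a) (hab : a < b) :
    gpNum (completeSplitGraph a b) = b := by
  refine gpNum_eq_of_forall_card_le ⟨univ.map .inr, ?_, by simp⟩ fun S hS => ?_
  · rw [isGPSet_completeSplitGraph_iff ha]
    simp
  · have hsum := S.card_toLeft_add_card_toRight
    have hleft : #S.toLeft ≤ a := by simpa using card_le_univ S.toLeft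
    have hright : #S.toRight ≤ b := by simpa using card_le_univ S.toRight
    rcases hS.toLeft_eq_empty_or_card_toRight_le_one ha with h | h
    · rw [h, card_empty] at hsum
      omega
    · omega

theorem isMobileGPSet_completeSplitGraph_clique (ha : 0 < a) :
    IsMobileGPSet (completeSplitGraph a b) (univ.map .inl) := by
  have hclique : IsGPSet (completeSplitGraph a b) (univ.map .inl) := by
    rw [isGPSet_completeSplitGraph_iff ha]
    simp
  refine isMobileGPSet_of_forall_legalMove hclique fun v hv => ?_
  obtain ⟨j, rfl⟩ : ∃ j, v = .inr j := by
    rcases v with i | j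
    · simp at hv
    · exact ⟨j, rfl⟩
  refine ⟨_, mem_insert_self _ _, .inl ⟨0, ha⟩, by simp, _, hv, by simp, rfl, ?_⟩
  rw [isGPSet_completeSplitGraph_iff ha]
  simp +contextual

theorem not_legalMove_of_forall_inl_notMem (ha : 0 < a) (hS : ∀ i, .inl i ∉ S)
    (hcard : 3 ≤ #S)
    (T : Finset (Fin a ⊕ Fin b)) : ¬ LegalMove (completeSplitGraph a b) S T := by
  rintro ⟨u, hu, v, hv, huv, rfl, hT⟩
  obtain ⟨j, rfl⟩ : ∃ j, u = .inr j := by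
    rcases u with i | j
    · exact absurd hu (hS i)
    · exact ⟨j, rfl⟩
  obtain ⟨i, rfl⟩ : ∃ i, v = .inl i := by
    rcases v with i | k
    · exact ⟨i, rfl⟩
    · simp at huv
  obtain ⟨x, hx, y, hy, hxy⟩ := one_lt_card.1 (show 1 < #(S.erase (.inr j)) by
    rw [card_erase_of_mem hu]; omega)
  obtain ⟨k, rfl⟩ : ∃ k, x = .inr k := by
    rcases x with i | k
    · exact absurd (mem_of_mem_erase hx) (hS i)
    · exact ⟨k, rfl⟩
  obtain ⟨l, rfl⟩ : ∃ l, y = .inr l := by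
    rcases y with i | l
    · exact absurd (mem_of_mem_erase hy) (hS i)
    · exact ⟨l, rfl⟩
  refine hxy (congrArg Sum.inr ((isGPSet_completeSplitGraph_iff ha).1 hT i k l
    (mem_insert_self _ _) (mem_insert_of_mem hx) (mem_insert_of_mem hy)))

theorem not_legalMove_of_forall_inl_mem (ha : 2 ≤ a) (hS : ∀ i, .inl i ∈ S) {j : Fin b}
    (hj : .inr j ∈ S) (T : Finset (Fin a ⊕ Fin b)) :
    ¬ LegalMove (completeSplitGraph a b) S T := by
  rintro ⟨u, hu, v, hv, huv, rfl, hT⟩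
  obtain ⟨k, rfl⟩ : ∃ k, v = .inr k := by
    rcases v with i | k
    · exact absurd (hS i) hv
    · exact ⟨k, rfl⟩
  obtain ⟨i, rfl⟩ : ∃ i, u = .inl i := by
    rcases u with i | l
    · exact ⟨i, rfl⟩
    · simp at huv
  obtain ⟨i', hi'⟩ := Fintype.exists_ne_of_one_lt_card (by simp; omega) i
  have hkj : k = j := (isGPSet_completeSplitGraph_iff (by omega)).1 hT i' k j
    (by simp [hS, hi']) (mem_insert_self _ _) (by simp [hj])
  exact hv (hkj ▸ hj)

theorem IsMobileGPSet.card_le (ha : 2 ≤ a) (hab : a < b)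
    (hS : IsMobileGPSet (completeSplitGraph a b) S) : #S ≤ a := by
  by_contra! hlt
  have hsum := S.card_toLeft_add_card_toRight
  have hleft : #S.toLeft ≤ a := by simpa using card_le_univ S.toLeft
  rcases hS.1.toLeft_eq_empty_or_card_toRight_le_one (by omega) with h | h
  · have hnotMem (i : Fin a) : .inl i ∉ S := by simpa using (eq_empty_iff_forall_notMem.1 h) i
    exact not_isMobileGPSet_of_forall_not_legalMove
      (not_legalMove_of_forall_inl_notMem (by omega) hnotMem (by omega))
      (hnotMem ⟨0, by omega⟩) hS
  · have hclique : S.toLeft = univ := eq_univ_of_card _ (by simp; omega)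
    obtain ⟨j, hj⟩ := card_eq_one.1 (show #S.toRight = 1 by omega)
    obtain ⟨k, hkj⟩ := Fintype.exists_ne_of_one_lt_card (by simp; omega) j
    have hk : .inr k ∉ S := by simpa [← mem_toRight, hj] using hkj
    refine not_isMobileGPSet_of_forall_not_legalMove
      (not_legalMove_of_forall_inl_mem ha (j := j) ?_ ?_) hk hS
    · simp [← mem_toLeft, hclique]
    · simp [← mem_toRight, hj]

theorem mob_completeSplitGraph (ha : 2 ≤ a) (hab : a < b) : mob (completeSplitGraph a b) = a :=
  mob_eq_of_forall_card_le
    ⟨univ.map .inl, isMobileGPSet_completeSplitGraph_clique (by omega), by simp⟩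
    fun _ hS => hS.card_le ha hab

end CompleteSplitGraph

/-- For all integers `2 ≤ a ≤ b` there is a connected simple graph `G` with
`mob(G) = a` and `gp(G) = b`. -/
theorem stmt2 (a b : ℕ) (ha : 2 ≤ a) (hab : a ≤ b) :
    ∃ (V : Type) (_ : Fintype V) (instDec : DecidableEq V) (G : SimpleGraph V),
      G.Connected ∧ @mob V instDec G = a ∧ gpNum G = b := by
  obtain rfl | hlt := hab.eq_or_lt
  · have : Nonempty (Fin a) := ⟨⟨0, by omega⟩⟩
    refine ⟨Fin a, inferInstance, inferInstance, ⊤, connected_top, ?_, ?_⟩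
    · rw [mob_eq_card_of_isGPSet_univ (isGPSet_top _), Fintype.card_fin]
    · rw [gpNum_eq_card_of_isGPSet_univ (isGPSet_top _), Fintype.card_fin]
  · exact ⟨Fin a ⊕ Fin b, inferInstance, inferInstance, completeSplitGraph a b,
      completeSplitGraph_connected (by omega), mob_completeSplitGraph ha hlt,
      gpNum_completeSplitGraph (by omega) hlt⟩
end

section
/- The Petersen graph P satisfies mob(P) = 4. -/
/-- The Kneser graph `K(n,k)`: vertices are the `k`-element subsets of an
`n`-element set, two vertices being adjacent iff the corresponding sets are
disjoint. -/
def kneserGraph (n k : ℕ) : SimpleGraph {s : Finset (Fin n) // s.card = k} where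
  Adj a b := a ≠ b ∧ Disjoint a.1 b.1
  symm := ⟨fun _ _ h => ⟨h.1.symm, h.2.symm⟩⟩
  loopless := ⟨fun _ h => h.1 rfl⟩

open Finset

theorem Finset.subset_union_of_card_eq_two {α : Type*} [DecidableEq α] {x y z : Finset α}
    (hz : z.card = 2) (hxy : Disjoint x y) (hzx : ¬Disjoint z x) (hzy : ¬Disjoint z y) :
    z ⊆ x ∪ y := by
  obtain ⟨c, hcz, hcx⟩ := not_disjoint_iff.1 hzx
  obtain ⟨d, hdz, hdy⟩ := not_disjoint_iff.1 hzy
  have hcd : c ≠ d := fun h => disjoint_left.1 hxy hcx (h ▸ hdy)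
  obtain rfl : ({c, d} : Finset α) = z :=
    eq_of_subset_of_card_le (insert_subset hcz (singleton_subset_iff.2 hdz))
      (by rw [hz, card_pair hcd])
  exact insert_subset (mem_union_left _ hcx) (singleton_subset_iff.2 (mem_union_right _ hdy))

theorem Finset.card_le_choose_of_forall_subset {α : Type*} {k : ℕ}
    {R : Finset {s : Finset α // s.card = k}} {A : Finset α} (h : ∀ p ∈ R, p.1 ⊆ A) :
    R.card ≤ A.card.choose k := by
  rw [← card_powersetCard, ← card_map (Function.Embedding.subtype _)]
  refine card_le_card fun s hs => ?_
  obtain ⟨p, hp, rfl⟩ := mem_map.1 hs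
  exact mem_powersetCard.2 ⟨h p hp, p.2⟩

namespace SimpleGraph

variable {V : Type*} {G : SimpleGraph V}

theorem dist_eq_two_of_ediam_le_two (hG : G.ediam ≤ 2) {u v : V} (huv : u ≠ v)
    (hadj : ¬G.Adj u v) : G.dist u v = 2 := by
  have hle : G.edist u v ≤ 2 := G.edist_le_ediam.trans hG
  have hreach : G.Reachable u v := reachable_of_edist_ne_top (ne_top_of_le_ne_top (by decide) hle)
  have hdist : G.dist u v ≤ 2 := by exact_mod_cast hreach.coe_dist_eq_edist ▸ hle
  have := hreach.one_lt_dist_of_ne_of_not_adj huv hadj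
  omega

theorem isGPSet_iff_of_ediam_le_two (hG : G.ediam ≤ 2) {S : Finset V} :
    IsGPSet G S ↔
      ∀ x ∈ S, ∀ y ∈ S, ∀ z ∈ S, G.Adj x y → G.Adj y z → x ≠ z → G.Adj x z := by
  have hdist : ∀ {u v}, u ≠ v → G.dist u v = 1 ∧ G.Adj u v ∨ G.dist u v = 2 ∧ ¬G.Adj u v :=
    fun {u v} huv => by
      by_cases h : G.Adj u v
      · exact .inl ⟨dist_eq_one_iff_adj.2 h, h⟩
      · exact .inr ⟨dist_eq_two_of_ediam_le_two hG huv h, h⟩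
  constructor
  · intro h x hx y hy z hz hxy hyz hxz
    by_contra hnxz
    refine h x hx y hy z hz hxy.ne hyz.ne hxz ?_
    rw [dist_eq_one_iff_adj.2 hxy, dist_eq_one_iff_adj.2 hyz,
      dist_eq_two_of_ediam_le_two hG hxz hnxz]
  · intro h x hx y hy z hz hxy hyz hxz hsum
    rcases hdist hxy with ⟨h₁, a₁⟩ | ⟨h₁, -⟩ <;> rcases hdist hyz with ⟨h₂, a₂⟩ | ⟨h₂, -⟩ <;>
      rcases hdist hxz with ⟨h₃, -⟩ | ⟨h₃, a₃⟩ <;> try omega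
    exact a₃ (h x hx y hy z hz a₁ a₂ hxz)

theorem legalMove_iff_of_ediam_le_two [DecidableEq V] (hG : G.ediam ≤ 2) {S T : Finset V} :
    LegalMove G S T ↔ ∃ u ∈ S, ∃ v, v ∉ S ∧ G.Adj u v ∧ T = insert v (S.erase u) ∧
      ∀ x ∈ T, ∀ y ∈ T, ∀ z ∈ T, G.Adj x y → G.Adj y z → x ≠ z → G.Adj x z := by
  simp only [LegalMove, isGPSet_iff_of_ediam_le_two hG]

variable [DecidableEq V] {S T : Finset V}

theorem LegalMove.isGPSet (h : LegalMove G S T) : IsGPSet G T := by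
  obtain ⟨-, -, -, -, -, -, hT⟩ := h
  exact hT

theorem LegalMove.card_eq (h : LegalMove G S T) : T.card = S.card := by
  obtain ⟨u, hu, v, hv, -, rfl, -⟩ := h
  rw [card_insert_of_notMem fun h => hv (mem_of_mem_erase h), card_erase_add_one hu]

theorem LegalMove.exists_erase_subset (h : LegalMove G S T) : ∃ u ∈ S, S.erase u ⊆ T := by
  obtain ⟨u, hu, v, -, -, rfl, -⟩ := h
  exact ⟨u, hu, subset_insert _ _⟩

theorem IsMobileGPSet.exists_mem_of_invariant (hS : IsMobileGPSet G S) {P : Finset V → Prop}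
    (h₀ : P S) (hmove : ∀ T T', P T → LegalMove G T T' → P T') (v : V) :
    ∃ T, P T ∧ v ∈ T := by
  obtain ⟨-, m, f, rfl, hf, hcover⟩ := hS
  have hP : ∀ i ≤ m, P (f i) := by
    intro i
    induction i with
    | zero => exact fun _ => h₀
    | succ i ih => exact fun hi => hmove _ _ (ih (by omega)) (hf i (by omega))
  obtain ⟨i, hi, hv⟩ := hcover v
  exact ⟨f i, hP i hi, hv⟩

theorem isMobileGPSet_of_isChain {l : List (Finset V)} (hS : IsGPSet G S)
    (hl : (S :: l).IsChain (LegalMove G)) (hcover : ∀ v, ∃ T ∈ S :: l, v ∈ T) :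
    IsMobileGPSet G S := by
  refine ⟨hS, l.length, fun i => (S :: l).getD i ∅, rfl, fun i hi => ?_, fun v => ?_⟩
  · have hi' : i + 1 < (S :: l).length := by simpa using hi
    beta_reduce
    rw [List.getD_eq_getElem _ _ hi', List.getD_eq_getElem _ _ (by omega)]
    exact List.isChain_iff_getElem.1 hl i hi'
  · obtain ⟨T, hT, hv⟩ := hcover v
    obtain ⟨i, hi, rfl⟩ := List.getElem_of_mem hT
    refine ⟨i, by simpa [Nat.lt_succ_iff] using hi, ?_⟩
    beta_reduce
    rwa [List.getD_eq_getElem _ _ hi]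

theorem mob_eq {n : ℕ} (hex : ∃ S, IsMobileGPSet G S ∧ S.card = n)
    (hle : ∀ S, IsMobileGPSet G S → S.card ≤ n) : mob G = n :=
  IsGreatest.csSup_eq ⟨hex, by rintro _ ⟨S, hS, rfl⟩; exact hle S hS⟩

end SimpleGraph

instance (n k : ℕ) : DecidableRel (kneserGraph n k).Adj :=
  fun a b => inferInstanceAs (Decidable (a ≠ b ∧ Disjoint a.1 b.1))

open SimpleGraph

section Kneser

variable {n k : ℕ}

theorem kneserGraph_cliqueFree_three (h : n < 3 * k) : (kneserGraph n k).CliqueFree 3 := by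
  intro t ht
  obtain ⟨a, b, c, hab, hac, hbc, rfl⟩ := is3Clique_iff.1 ht
  have hcard : (a.1 ∪ b.1 ∪ c.1).card = 3 * k := by
    rw [card_union_of_disjoint (disjoint_union_left.2 ⟨hac.2, hbc.2⟩),
      card_union_of_disjoint hab.2, a.2, b.2, c.2]
    ring
  have := (a.1 ∪ b.1 ∪ c.1).card_le_univ
  rw [Fintype.card_fin] at this
  omega

theorem kneserGraph_ediam_le_two (h : 3 * k ≤ n + 1) : (kneserGraph n k).ediam ≤ 2 := by
  refine ediam_le_iff.2 fun a b => ?_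
  by_cases hab : (kneserGraph n k).Adj a b ∨ a = b
  · exact (edist_le_one_iff_adj_or_eq.2 hab).trans (by norm_num)
  obtain ⟨hnadj, hne⟩ := not_or.1 hab
  obtain ⟨x, hxa, hxb⟩ := not_disjoint_iff.1 fun hd => hnadj ⟨hne, hd⟩
  have hcard : k ≤ (a.1 ∪ b.1)ᶜ.card := by
    have := card_union_add_card_inter a.1 b.1
    have : 1 ≤ (a.1 ∩ b.1).card := card_pos.2 ⟨x, mem_inter.2 ⟨hxa, hxb⟩⟩
    rw [card_compl, Fintype.card_fin]
    omega
  obtain ⟨c, hc, hck⟩ := exists_subset_card_eq hcard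
  have hadj : ∀ p, x ∈ p.1 → p.1 ⊆ a.1 ∪ b.1 → (kneserGraph n k).Adj p ⟨c, hck⟩ :=
    fun p hxp hp => ⟨by rintro rfl; exact mem_compl.1 (hc hxp) (hp hxp),
      disjoint_of_subset_right hc (disjoint_compl_right.mono_left hp)⟩
  exact (edist_eq_two_iff.2 ⟨hne, hnadj, ⟨c, hck⟩,
    hadj a hxa subset_union_left, hadj b hxb subset_union_right⟩).le

theorem kneserGraph_two_subset_union_of_adj (hn : n < 6)
    {S : Finset {s : Finset (Fin n) // s.card = 2}}
    (hS : ∀ x ∈ S, ∀ y ∈ S, ∀ z ∈ S, (kneserGraph n 2).Adj x y → (kneserGraph n 2).Adj y z →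
      x ≠ z → (kneserGraph n 2).Adj x z)
    {x y : {s : Finset (Fin n) // s.card = 2}} (hx : x ∈ S) (hy : y ∈ S)
    (hxy : (kneserGraph n 2).Adj x y) {z} (hz : z ∈ S) : z.1 ⊆ x.1 ∪ y.1 := by
  by_cases hzx : z = x
  · exact hzx ▸ subset_union_left
  by_cases hzy : z = y
  · exact hzy ▸ subset_union_right
  have htriangle := kneserGraph_cliqueFree_three (k := 2) (by omega)
  have hnzx : ¬(kneserGraph n 2).Adj z x := fun h =>
    htriangle {z, x, y} (is3Clique_triple_iff.2 ⟨h, hS z hz x hx y hy h hxy hzy, hxy⟩)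
  have hnzy : ¬(kneserGraph n 2).Adj z y := fun h =>
    htriangle {z, x, y} (is3Clique_triple_iff.2 ⟨hS z hz y hy x hx h hxy.symm hzx, h, hxy⟩)
  exact subset_union_of_card_eq_two z.2 hxy.2 (fun h => hnzx ⟨hzx, h⟩) (fun h => hnzy ⟨hzy, h⟩)

end Kneser

set_option synthInstance.maxSize 1000 in
theorem petersen_indepSetFree_five : (kneserGraph 5 2).IndepSetFree 5 := by
  rw [← cliqueFree_compl, cliqueFree_iff]
  refine ⟨fun f => ?_⟩
  -- Stated vertex by vertex so that `decide` prunes every branch at its first non-edge.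
  have key : ∀ x y, (kneserGraph 5 2)ᶜ.Adj x y → ∀ z, (kneserGraph 5 2)ᶜ.Adj x z →
      (kneserGraph 5 2)ᶜ.Adj y z → ∀ u, (kneserGraph 5 2)ᶜ.Adj x u →
      (kneserGraph 5 2)ᶜ.Adj y u → (kneserGraph 5 2)ᶜ.Adj z u → ∀ w,
      (kneserGraph 5 2)ᶜ.Adj x w → (kneserGraph 5 2)ᶜ.Adj y w → (kneserGraph 5 2)ᶜ.Adj z w →
      ¬(kneserGraph 5 2)ᶜ.Adj u w := by
    decide
  have hf : ∀ i j : Fin 5, i ≠ j → (kneserGraph 5 2)ᶜ.Adj (f i) (f j) :=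
    fun i j hij => f.toHom.map_adj hij
  exact key _ _ (hf 0 1 (by decide)) _ (hf 0 2 (by decide)) (hf 1 2 (by decide))
    _ (hf 0 3 (by decide)) (hf 1 3 (by decide)) (hf 2 3 (by decide))
    _ (hf 0 4 (by decide)) (hf 1 4 (by decide)) (hf 2 4 (by decide)) (hf 3 4 (by decide))

section Petersen

variable {S : Finset {s : Finset (Fin 5) // s.card = 2}}

theorem petersen_exists_notMem_of_isGPSet (hS : IsGPSet (kneserGraph 5 2) S)
    (hcard : 5 ≤ S.card) : ∃ a : Fin 5, ∀ p ∈ S, a ∉ p.1 := by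
  rw [isGPSet_iff_of_ediam_le_two (kneserGraph_ediam_le_two le_rfl)] at hS
  obtain ⟨x, hx, y, hy, hxy⟩ : ∃ x ∈ S, ∃ y ∈ S, (kneserGraph 5 2).Adj x y := by
    by_contra! hindep
    obtain ⟨t, hts, ht⟩ := exists_subset_card_eq hcard
    exact petersen_indepSetFree_five t
      ⟨fun u hu v hv _ => hindep u (hts hu) v (hts hv), ht⟩
  obtain ⟨a, -, ha⟩ := exists_mem_notMem_of_card_lt_card (s := x.1 ∪ y.1) (t := univ)
    (by rw [card_union_of_disjoint hxy.2, x.2, y.2, card_univ, Fintype.card_fin]; omega)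
  exact ⟨a, fun p hp hap => ha (kneserGraph_two_subset_union_of_adj (by omega) hS hx hy hxy hp hap)⟩

theorem petersen_eq_of_forall_notMem (hcard : 4 ≤ S.card) {a b : Fin 5}
    (ha : ∀ p ∈ S, a ∉ p.1) (hb : ∀ p ∈ S, b ∉ p.1) : a = b := by
  by_contra hab
  have := card_le_choose_of_forall_subset (A := {a, b}ᶜ) fun p hp x hx => by
    simp only [mem_compl, mem_insert, mem_singleton, not_or]
    exact ⟨fun h => ha p hp (h ▸ hx), fun h => hb p hp (h ▸ hx)⟩
  rw [card_compl, card_pair hab, Fintype.card_fin] at this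
  have hchoose : (5 - 2).choose 2 = 3 := rfl
  omega

theorem petersen_card_le_four_of_isMobileGPSet (hS : IsMobileGPSet (kneserGraph 5 2) S) :
    S.card ≤ 4 := by
  by_contra! hcard
  obtain ⟨a, ha⟩ := petersen_exists_notMem_of_isGPSet hS.1 hcard
  have hinv : ∀ T T', 5 ≤ T.card ∧ (∀ p ∈ T, a ∉ p.1) → LegalMove (kneserGraph 5 2) T T' →
      5 ≤ T'.card ∧ ∀ p ∈ T', a ∉ p.1 := by
    rintro T T' ⟨hcard, hT⟩ hmove
    have hcard' : 5 ≤ T'.card := hmove.card_eq ▸ hcard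
    obtain ⟨b, hb⟩ := petersen_exists_notMem_of_isGPSet hmove.isGPSet hcard'
    obtain ⟨u, hu, hsub⟩ := hmove.exists_erase_subset
    obtain rfl : a = b := petersen_eq_of_forall_notMem (by rw [card_erase_of_mem hu]; omega)
      (fun p hp => hT p (mem_of_mem_erase hp)) (fun p hp => hb p (hsub hp))
    exact ⟨hcard', hb⟩
  obtain ⟨T, ⟨-, hT⟩, hw⟩ :=
    hS.exists_mem_of_invariant ⟨hcard, ha⟩ hinv ⟨{a, a + 1}, card_pair (by simp)⟩
  exact hT _ hw (mem_insert_self _ _)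

end Petersen

/-- Six moves out of the star at `0`, each bringing a robot to a vertex not visited before. -/
def petersenTour : List (Finset {s : Finset (Fin 5) // s.card = 2}) :=
  List.map (Finset.subtype fun s : Finset (Fin 5) => s.card = 2)
    [{{0, 2}, {0, 3}, {0, 4}, {2, 3}}, {{0, 3}, {0, 4}, {2, 3}, {3, 4}},
      {{0, 4}, {2, 3}, {2, 4}, {3, 4}}, {{1, 2}, {2, 3}, {2, 4}, {3, 4}},
      {{1, 2}, {1, 4}, {2, 4}, {3, 4}}, {{1, 2}, {1, 3}, {1, 4}, {3, 4}}]

set_option synthInstance.maxSize 1000 in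
theorem petersen_isMobileGPSet_star :
    IsMobileGPSet (kneserGraph 5 2) {p | 0 ∈ p.1} := by
  have hdiam := kneserGraph_ediam_le_two (n := 5) (k := 2) le_rfl
  refine isMobileGPSet_of_isChain (l := petersenTour) ?_ ?_ (by decide)
  · rw [isGPSet_iff_of_ediam_le_two hdiam]
    decide
  · rw [List.IsChain.iff fun _ _ => legalMove_iff_of_ediam_le_two hdiam]
    decide

/-- The Petersen graph `K(5,2)` satisfies `mob(P) = 4`. -/
theorem stmt5 : mob (kneserGraph 5 2) = 4 :=
  mob_eq ⟨_, petersen_isMobileGPSet_star, by decide⟩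
    fun _ => petersen_card_le_four_of_isMobileGPSet
end

section
/- A connected simple graph G with n = n(G) ≥ 3 vertices satisfies mob(G) = n − 1 if and only if G is obtained from the complete graph K_{n−1} by attaching a leaf to one of its vertices (i.e., G consists of a clique on n−1 vertices plus one additional vertex adjacent to exactly one clique vertex). -/
open Finset

namespace SimpleGraph

variable {V : Type*} {G : SimpleGraph V} {u v w : V}

lemma dist_eq_two_of_adj_of_adj (hne : u ≠ w) (hn : ¬G.Adj u w) (huv : G.Adj u v)
    (hvw : G.Adj v w) : G.dist u w = 2 := by
  rw [dist, edist_eq_two_iff.mpr ⟨hne, hn, v, huv, hvw.symm⟩]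
  rfl

lemma Reachable.exists_adj_dist_add_one_eq (h : G.Reachable u w) (hne : u ≠ w) :
    ∃ v, G.Adj u v ∧ G.dist v w + 1 = G.dist u w := by
  obtain ⟨p, hp⟩ := h.exists_walk_length_eq_dist
  cases p with
  | nil => exact absurd rfl hne
  | cons huv q =>
    refine ⟨_, huv, le_antisymm ?_ ?_⟩
    · simpa [← hp] using dist_le q
    · simpa [dist_eq_one_iff_adj.mpr huv, add_comm] using
        (Walk.reachable q).dist_triangle_right u

lemma dist_le_two_of_forall_adj (hw : ∀ x, x ≠ w → G.Adj w x) (u v : V) : G.dist u v ≤ 2 := by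
  have hle : ∀ x, G.dist w x ≤ 1 := fun x ↦ by
    rcases eq_or_ne x w with rfl | hx
    · simp
    · exact (dist_eq_one_iff_adj.mpr (hw x hx)).le
  have hreach : G.Reachable u w := by
    rcases eq_or_ne u w with rfl | hu
    · rfl
    · exact (hw u hu).reachable.symm
  calc G.dist u v ≤ G.dist u w + G.dist w v := hreach.dist_triangle_left v
    _ ≤ 2 := by grind [dist_comm]

end SimpleGraph

namespace IsGPSet

variable {V : Type*} {G : SimpleGraph V} {S : Finset V} {u v w : V}

/-- General position sets contain no induced path on three vertices. -/
lemma adj_of_adj_of_adj (hS : IsGPSet G S) (hu : u ∈ S) (hv : v ∈ S) (hw : w ∈ S)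
    (hne : u ≠ w) (huv : G.Adj u v) (hvw : G.Adj v w) : G.Adj u w := by
  by_contra hn
  apply hS u hu v hv w hw huv.ne hvw.ne hne
  rw [SimpleGraph.dist_eq_one_iff_adj.mpr huv, SimpleGraph.dist_eq_one_iff_adj.mpr hvw,
    SimpleGraph.dist_eq_two_of_adj_of_adj hne hn huv hvw]

lemma notMem_of_adj_of_dist_add_one_eq (hS : IsGPSet G S) (hu : u ∈ S) (hw : w ∈ S)
    (huv : G.Adj u v) (hvw : v ≠ w) (hd : G.dist v w + 1 = G.dist u w) : v ∉ S := by
  intro hv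
  have huw : u ≠ w := by
    rintro rfl
    simp at hd
  apply hS u hu v hv w hw huv.ne hvw huw
  rw [SimpleGraph.dist_eq_one_iff_adj.mpr huv, add_comm, hd]

variable [Fintype V] [DecidableEq V]

lemma adj_of_not_adj_of_univ_erase (hG : G.Connected) (hS : IsGPSet G (univ.erase v))
    (hu : u ≠ v) (hw : w ≠ v) (hne : u ≠ w) (hn : ¬G.Adj u w) : G.Adj u v := by
  obtain ⟨x, hux, hd⟩ := (hG u w).exists_adj_dist_add_one_eq hne
  have hxw : x ≠ w := by
    rintro rfl
    exact hn hux
  have hxv : x = v := by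
    simpa using hS.notMem_of_adj_of_dist_add_one_eq (by simpa) (by simpa) hux hxw hd
  exact hxv ▸ hux

end IsGPSet

section

variable {V : Type*} {G : SimpleGraph V}

lemma isGPSet_of_dist_le_two (hG : G.Connected) {S : Finset V}
    (hd : ∀ u ∈ S, ∀ v ∈ S, G.dist u v ≤ 2)
    (hS : ∀ u ∈ S, ∀ v ∈ S, ∀ w ∈ S, u ≠ w → G.Adj u v → G.Adj v w → G.Adj u w) :
    IsGPSet G S := by
  intro u hu v hv w hw huv hvw huw h
  have h1 : 1 ≤ G.dist u v := hG.pos_dist_of_ne huv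
  have h2 : 1 ≤ G.dist v w := hG.pos_dist_of_ne hvw
  have h3 := hd u hu w hw
  have hadj := hS u hu v hv w hw huw (SimpleGraph.dist_eq_one_iff_adj.mp (by omega))
    (SimpleGraph.dist_eq_one_iff_adj.mp (by omega))
  rw [SimpleGraph.dist_eq_one_iff_adj.mpr hadj] at h
  omega

lemma isGPSet_of_isClique {S : Finset V} (h : G.IsClique (S : Set V)) : IsGPSet G S := by
  intro u hu v hv w hw huv hvw huw
  rw [SimpleGraph.dist_eq_one_iff_adj.mpr (h hu hv huv),
    SimpleGraph.dist_eq_one_iff_adj.mpr (h hv hw hvw),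
    SimpleGraph.dist_eq_one_iff_adj.mpr (h hu hw huw)]
  omega

variable [DecidableEq V]

lemma IsMobileGPSet.exists_legalMove {S : Finset V} (hS : IsMobileGPSet G S) {v : V}
    (hv : v ∉ S) : ∃ T, LegalMove G S T := by
  obtain ⟨-, m, f, rfl, hmove, hcover⟩ := hS
  obtain ⟨i, him, hvi⟩ := hcover v
  have hi : i ≠ 0 := by
    rintro rfl
    exact hv hvi
  exact ⟨f 1, hmove 0 (by omega)⟩

variable [Fintype V]

lemma IsMobileGPSet.exists_adj_isGPSet_univ_erase {v : V}
    (hS : IsMobileGPSet G (univ.erase v)) : ∃ u, G.Adj u v ∧ IsGPSet G (univ.erase u) := by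
  obtain ⟨T, u, hu, w, hw, huw, rfl, hT⟩ := hS.exists_legalMove (notMem_erase v univ)
  obtain rfl : w = v := by simpa using hw
  refine ⟨u, huw, ?_⟩
  rwa [erase_right_comm, insert_erase (by simpa [eq_comm] using hu)] at hT

lemma isMobileGPSet_univ (h : IsGPSet G univ) : IsMobileGPSet G univ :=
  ⟨h, 0, fun _ ↦ univ, rfl, by simp, fun v ↦ ⟨0, le_rfl, mem_univ v⟩⟩

lemma isMobileGPSet_univ_erase {v w : V} (hv : IsGPSet G (univ.erase v))
    (hw : IsGPSet G (univ.erase w)) (hwv : G.Adj w v) : IsMobileGPSet G (univ.erase v) := by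
  refine ⟨hv, 1, fun i ↦ if i = 0 then univ.erase v else univ.erase w, rfl, ?_, ?_⟩
  · intro i hi
    obtain rfl : i = 0 := by omega
    refine ⟨w, by simpa using hwv.ne, v, by simp, hwv, ?_, hw⟩
    change univ.erase w = insert v ((univ.erase v).erase w)
    rw [erase_right_comm, insert_erase (by simpa using hwv.ne')]
  · intro x
    rcases eq_or_ne x v with rfl | hx
    · exact ⟨1, le_rfl, by simpa using hwv.ne'⟩
    · exact ⟨0, zero_le_one, by simpa using hx⟩

lemma bddAbove_mobileGPSet_card :
    BddAbove {n | ∃ S : Finset V, IsMobileGPSet G S ∧ #S = n} :=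
  ⟨Fintype.card V, by rintro _ ⟨S, -, rfl⟩; exact card_le_univ S⟩

lemma card_le_mob {S : Finset V} (hS : IsMobileGPSet G S) : #S ≤ mob G :=
  le_csSup bddAbove_mobileGPSet_card ⟨S, hS, rfl⟩

lemma exists_isMobileGPSet_card_eq_mob (h : 0 < mob G) :
    ∃ S, IsMobileGPSet G S ∧ #S = mob G := by
  refine Nat.sSup_mem ?_ bddAbove_mobileGPSet_card
  by_contra hempty
  rw [Set.not_nonempty_iff_eq_empty] at hempty
  simp [mob, hempty] at h

lemma mob_le_card_sub_one (h : ¬IsGPSet G univ) : mob G ≤ Fintype.card V - 1 := by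
  refine csSup_le' ?_
  rintro _ ⟨S, hS, rfl⟩
  have hSu : S ≠ univ := by
    rintro rfl
    exact h hS.1
  have := (card_lt_iff_ne_univ S).mpr hSu
  omega

end

section

variable {V : Type*} [Fintype V] [DecidableEq V] {G : SimpleGraph V} {u v w : V}

lemma forall_adj_eq_of_isClique_compl (hu : IsGPSet G (univ.erase u)) (huv : G.Adj u v)
    (hcl : G.IsClique {v}ᶜ) (htop : G ≠ ⊤) : ∀ z, G.Adj v z → z = u := by
  obtain ⟨t, htv, hvt⟩ : ∃ t, t ≠ v ∧ ¬G.Adj v t := by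
    by_contra! h
    refine htop (SimpleGraph.isClique_univ.mp fun a _ b _ hab ↦ ?_)
    rcases eq_or_ne a v with rfl | ha
    · exact h b hab.symm
    rcases eq_or_ne b v with rfl | hb
    · exact (h a ha).symm
    exact hcl ha hb hab
  intro z hvz
  by_contra hzu
  have htu : t ≠ u := by
    rintro rfl
    exact hvt huv.symm
  have hzt : z ≠ t := by
    rintro rfl
    exact hvt hvz
  -- otherwise `v - z - t` is an induced path avoiding `u`
  exact hvt (hu.adj_of_adj_of_adj (by simpa using huv.ne') (by simpa) (by simpa) htv.symm hvz
    (hcl hvz.ne' htv hzt))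

lemma isClique_compl_of_not_isClique_compl (hG : G.Connected) (hv : IsGPSet G (univ.erase v))
    (hu : IsGPSet G (univ.erase u)) (huv : G.Adj u v) (hcl : ¬G.IsClique {v}ᶜ) :
    G.IsClique {u}ᶜ := by
  have hv' : ∀ {x}, x ≠ v → x ∈ univ.erase v := by simp
  have hu' : ∀ {x}, x ≠ u → x ∈ univ.erase u := by simp
  obtain ⟨y, hyv, hyu, huy, hvy⟩ : ∃ y, y ≠ v ∧ y ≠ u ∧ ¬G.Adj u y ∧ G.Adj v y := by
    obtain ⟨x, hx, y, hy, hxy, hn⟩ : ∃ x, x ≠ v ∧ ∃ y, y ≠ v ∧ x ≠ y ∧ ¬G.Adj x y := by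
      simpa [SimpleGraph.IsClique, Set.Pairwise] using hcl
    have hxv := hv.adj_of_not_adj_of_univ_erase hG hx hy hxy hn
    have hyv := hv.adj_of_not_adj_of_univ_erase hG hy hx hxy.symm (mt G.adj_symm hn)
    -- the induced path `x - v - y` must pass through `u`
    rcases eq_or_ne x u with rfl | hxu
    · exact ⟨y, hy, hxy.symm, hn, hyv.symm⟩
    rcases eq_or_ne y u with rfl | hyu
    · exact ⟨x, hx, hxy, mt G.adj_symm hn, hxv.symm⟩
    exact absurd (hu.adj_of_adj_of_adj (hu' hxu) (hu' huv.ne') (hu' hyu) hxy hxv hyv.symm) hn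
  have hvc : ∀ c, c ≠ u → c ≠ v → G.Adj v c := by
    intro c hcu hcv
    by_contra hvc
    have hcu' := hu.adj_of_not_adj_of_univ_erase hG hcu huv.ne' hcv (mt G.adj_symm hvc)
    have hcy : c ≠ y := by
      rintro rfl
      exact hvc hvy
    by_cases hcy' : G.Adj c y
    · exact huy (hv.adj_of_adj_of_adj (hv' huv.ne) (hv' hcv) (hv' hyv) hyu.symm hcu'.symm hcy')
    · exact hvc (hv.adj_of_not_adj_of_univ_erase hG hcv hyv hcy hcy').symm
  intro a ha b hb hab
  rcases eq_or_ne a v with rfl | hav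
  · exact hvc b hb hab.symm
  rcases eq_or_ne b v with rfl | hbv
  · exact (hvc a ha hab).symm
  by_contra hn
  exact hn (hu.adj_of_adj_of_adj (hu' ha) (hu' huv.ne') (hu' hb) hab
    (hv.adj_of_not_adj_of_univ_erase hG hav hbv hab hn)
    (hv.adj_of_not_adj_of_univ_erase hG hbv hav hab.symm (mt G.adj_symm hn)).symm)

lemma exists_leaf_of_mob_eq_card_sub_one (hG : G.Connected) (hn : 2 ≤ Fintype.card V)
    (hmob : mob G = Fintype.card V - 1) :
    ∃ v w, G.Adj v w ∧ (∀ x, G.Adj v x → x = w) ∧ G.IsClique {v}ᶜ := by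
  obtain ⟨S, hS, hcard⟩ := exists_isMobileGPSet_card_eq_mob (G := G) (by omega)
  obtain ⟨v, hv⟩ := card_eq_one.mp (by rw [card_compl]; omega : #Sᶜ = 1)
  rw [← compl_compl S, hv, compl_singleton] at hS
  have htop : G ≠ ⊤ := by
    intro htop
    have := card_le_mob (isMobileGPSet_univ (isGPSet_of_isClique (G := G) (S := univ)
      (by simp [htop])))
    simp only [card_univ] at this
    omega
  obtain ⟨u, huv, hu⟩ := hS.exists_adj_isGPSet_univ_erase
  by_cases hcl : G.IsClique {v}ᶜ
  · exact ⟨v, u, huv.symm, forall_adj_eq_of_isClique_compl hu huv hcl htop, hcl⟩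
  · have hcl' := isClique_compl_of_not_isClique_compl hG hS.1 hu huv hcl
    exact ⟨u, v, huv, forall_adj_eq_of_isClique_compl hS.1 huv.symm hcl' htop, hcl'⟩

lemma mob_eq_card_sub_one_of_leaf (hG : G.Connected) (hn : 3 ≤ Fintype.card V)
    (hvw : G.Adj v w) (hleaf : ∀ x, G.Adj v x → x = w) (hcl : G.IsClique {v}ᶜ) :
    mob G = Fintype.card V - 1 := by
  have hw : ∀ x, x ≠ w → G.Adj w x := fun x hxw ↦ by
    rcases eq_or_ne x v with rfl | hxv
    · exact hvw.symm
    · exact hcl hvw.ne' hxv hxw.symm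
  have hSv : IsGPSet G (univ.erase v) :=
    isGPSet_of_isClique (by simpa [← Set.compl_eq_univ_sdiff] using hcl)
  have hSw : IsGPSet G (univ.erase w) := by
    refine isGPSet_of_dist_le_two hG (fun x _ y _ ↦ G.dist_le_two_of_forall_adj hw x y) ?_
    intro x _ y hy z _ hxz hxy hyz
    have hyw : y ≠ w := by simpa using hy
    have hxv : x ≠ v := by
      rintro rfl
      exact hyw (hleaf y hxy)
    have hzv : z ≠ v := by
      rintro rfl
      exact hyw (hleaf y hyz.symm)
    exact hcl hxv hzv hxz
  obtain ⟨x, hx, hxw⟩ := exists_mem_ne (s := univ.erase v)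
    (by rw [card_erase_of_mem (mem_univ v), card_univ]; omega) w
  refine le_antisymm (mob_le_card_sub_one fun h ↦ ?_) ?_
  · exact hxw (hleaf x (h.adj_of_adj_of_adj (mem_univ v) (mem_univ w) (mem_univ x)
      (by simpa [eq_comm] using hx) hvw (hw x hxw)))
  · simpa using card_le_mob (isMobileGPSet_univ_erase hSv hSw hvw.symm)

end

/-- A connected simple graph `G` on `n ≥ 3` vertices satisfies `mob(G) = n - 1`
iff `G` consists of a clique on `n - 1` vertices together with one further
vertex adjacent to exactly one vertex of the clique. -/
theorem stmt7 {V : Type*} [Fintype V] [DecidableEq V] (G : SimpleGraph V)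
    (hG : G.Connected) (hn : 3 ≤ Fintype.card V) :
    mob G = Fintype.card V - 1 ↔
      ∃ v w : V, v ≠ w ∧ G.Adj v w ∧ (∀ x : V, G.Adj v x → x = w) ∧
        ∀ x y : V, x ≠ v → y ≠ v → x ≠ y → G.Adj x y := by
  constructor
  · intro hmob
    obtain ⟨v, w, hvw, hleaf, hcl⟩ :=
      exists_leaf_of_mob_eq_card_sub_one hG (by omega : 2 ≤ Fintype.card V) hmob
    exact ⟨v, w, hvw.ne, hvw, hleaf, fun x y hx hy ↦ hcl hx hy⟩
  · rintro ⟨v, w, -, hvw, hleaf, hcl⟩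
    exact mob_eq_card_sub_one_of_leaf hG hn hvw hleaf fun x hx y hy ↦ hcl x y hx hy
end

section
/- If T is a tree with at least 2 vertices, then mob(T) = 2. -/
/-!
Any two vertices are in general position. A finite connected graph has a vertex `b` whose
removal leaves it connected, so one robot can stay at `b` while the other walks through all
remaining vertices: `mob ≥ 2`.

Conversely, suppose three robots stand at `a, b, c`. In a tree they have a median `w`, lying
on the geodesics between any two of them, and `w` is unoccupied because the set is in general
position. This configuration is invariant under legal moves: a robot cannot step onto `w`,
since `w` would then lie between two other robots, and a robot moving along an edge that avoids
`w` stays in its branch of the tree at `w`. Hence `w` is never visited, and `mob ≤ 2`.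
-/

namespace SimpleGraph

variable {V : Type*} {G T : SimpleGraph V}

def Between (G : SimpleGraph V) (x w y : V) : Prop :=
  G.dist x w + G.dist w y = G.dist x y

lemma Between.symm {x w y : V} (h : G.Between x w y) : G.Between y w x := by
  rw [Between, dist_comm, add_comm, dist_comm (u := x)] at h
  rwa [Between, dist_comm (u := y)]

lemma between_self_left (G : SimpleGraph V) (x y : V) : G.Between x x y := by
  simp [Between]

lemma Connected.eq_of_between_self (hG : G.Connected) {x w : V} (h : G.Between x w x) :
    w = x := by
  rw [Between, dist_self, Nat.add_eq_zero_iff] at h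
  exact hG.dist_eq_zero_iff.mp h.2

lemma Connected.exists_adj_dist_add_one_eq (hG : G.Connected) {w b : V} (h : w ≠ b) :
    ∃ w', G.Adj w w' ∧ G.dist w' b + 1 = G.dist w b := by
  obtain ⟨p, hp⟩ := hG.exists_walk_length_eq_dist w b
  cases p with
  | nil => exact absurd rfl h
  | @cons _ w' _ hadj q =>
    refine ⟨w', hadj, le_antisymm ?_ ?_⟩
    · rw [← hp, Walk.length_cons]
      exact Nat.add_le_add_right (dist_le q) 1
    · have := hG.dist_triangle (u := w) (v := w') (w := b)
      rw [dist_eq_one_iff_adj.mpr hadj] at this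
      omega

lemma IsTree.length_eq_dist_of_isPath (hT : T.IsTree) {x y : V} {p : T.Walk x y}
    (hp : p.IsPath) : p.length = T.dist x y := by
  obtain ⟨q, hq, hql⟩ := hT.connected.exists_path_of_dist x y
  rw [(hT.existsUnique_path x y).unique hp hq, hql]

lemma IsTree.between_iff_mem_support (hT : T.IsTree) {x y w : V} {p : T.Walk x y}
    (hp : p.IsPath) : T.Between x w y ↔ w ∈ p.support := by
  classical
  constructor
  · intro h
    obtain ⟨q₁, -, hq₁⟩ := hT.connected.exists_path_of_dist x w
    obtain ⟨q₂, -, hq₂⟩ := hT.connected.exists_path_of_dist w y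
    have hq : (q₁.append q₂).IsPath := (q₁.append q₂).isPath_of_length_eq_dist <| by
      rw [Walk.length_append, hq₁, hq₂]; exact h
    rw [(hT.existsUnique_path x y).unique hp hq, Walk.mem_support_append_iff]
    exact Or.inl q₁.end_mem_support
  · intro hw
    have hlen := congrArg Walk.length (p.take_spec hw)
    rw [Walk.length_append, hT.length_eq_dist_of_isPath (hp.takeUntil hw),
      hT.length_eq_dist_of_isPath (hp.dropUntil hw), hT.length_eq_dist_of_isPath hp] at hlen
    exact hlen

lemma IsTree.between_or_between (hT : T.IsTree) {x w z : V} (h : T.Between x w z) (y : V) :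
    T.Between x w y ∨ T.Between y w z := by
  classical
  obtain ⟨p, hp, -⟩ := hT.connected.exists_path_of_dist x y
  obtain ⟨q, hq, -⟩ := hT.connected.exists_path_of_dist y z
  have hw := (p.append q).support_bypass_subset_support
    ((hT.between_iff_mem_support (p.append q).bypass_isPath).mp h)
  rw [Walk.mem_support_append_iff] at hw
  exact hw.imp (hT.between_iff_mem_support hp).mpr (hT.between_iff_mem_support hq).mpr

lemma IsTree.between_of_adj (hT : T.IsTree) {p w u v : V} (h : T.Between p w u)
    (huv : T.Adj u v) (hu : u ≠ w) (hv : v ≠ w) : T.Between p w v := by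
  refine (hT.between_or_between h v).resolve_right fun h' => ?_
  have := hT.connected.pos_dist_of_ne hu
  have := hT.connected.pos_dist_of_ne hv
  rw [Between, dist_comm (u := v) (v := u), dist_eq_one_iff_adj.mpr huv, dist_comm (u := w)] at h'
  omega

lemma IsTree.exists_median (hT : T.IsTree) (a b c : V) :
    ∃ w, T.Between a w b ∧ T.Between a w c ∧ T.Between b w c := by
  classical
  -- take `w` farthest from `a` among the vertices between `a` and both `b` and `c`;
  -- a step from `w` towards `b` leaves the geodesics from `a` to `c`
  let P k := ∃ w, T.Between a w b ∧ T.Between a w c ∧ T.dist a w = k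
  obtain ⟨w, hab, hac, hk⟩ : P (Nat.findGreatest P (T.dist a b)) :=
    Nat.findGreatest_spec (Nat.zero_le _)
      ⟨a, T.between_self_left a b, T.between_self_left a c, dist_self⟩
  refine ⟨w, hab, hac, ?_⟩
  by_cases hwb : w = b
  · exact hwb ▸ T.between_self_left w c
  obtain ⟨w', hadj, hw'b⟩ := hT.connected.exists_adj_dist_add_one_eq hwb
  have hab' : T.Between a w' b ∧ T.dist a w' = T.dist a w + 1 := by
    have := hT.connected.dist_triangle (u := a) (v := w) (w := w')
    have := hT.connected.dist_triangle (u := a) (v := w') (w := b)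
    rw [dist_eq_one_iff_adj.mpr hadj] at *
    unfold Between at hab ⊢
    omega
  have hac' : ¬ T.Between a w' c := fun h => by
    have := Nat.le_findGreatest (P := P) (m := T.dist a w') (n := T.dist a b)
      (by unfold Between at hab'; omega) ⟨w', hab'.1, h, rfl⟩
    omega
  have hbc' := ((hT.between_or_between hab'.1 c).resolve_left hac').symm
  have e₁ := T.dist_comm (u := b) (v := w)
  have e₂ := T.dist_comm (u := b) (v := w')
  have e₃ := T.dist_comm (u := c) (v := w)
  have e₄ := T.dist_comm (u := c) (v := w')
  unfold Between at *
  rcases hT.dist_eq_dist_add_one_of_adj c hadj with h | h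
  · exact absurd (by omega) hac'
  · omega

lemma Preconnected.exists_walk_forall_mem_support [Finite V] (hG : G.Preconnected) (x : V) :
    ∃ y, ∃ W : G.Walk x y, ∀ v, v ∈ W.support := by
  classical
  have := Fintype.ofFinite V
  suffices ∀ s : Finset V, ∃ y, ∃ W : G.Walk x y, ∀ v ∈ s, v ∈ W.support by
    simpa using this Finset.univ
  intro s
  induction s using Finset.induction_on with
  | empty => exact ⟨x, .nil, by simp⟩
  | insert a s _ ih =>
    obtain ⟨y, W, hW⟩ := ih
    obtain ⟨P⟩ := hG y a
    refine ⟨a, W.append P, fun v hv => ?_⟩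
    rw [Walk.mem_support_append_iff]
    rcases Finset.mem_insert.mp hv with rfl | hv
    · exact Or.inr P.end_mem_support
    · exact Or.inl (hW v hv)

lemma exists_walk_forall_mem_support_of_preconnected_induce_compl [Finite V] {b x : V}
    (hxb : x ≠ b) (hG : (G.induce {b}ᶜ).Preconnected) :
    ∃ y, ∃ W : G.Walk x y, b ∉ W.support ∧ ∀ v ≠ b, v ∈ W.support := by
  obtain ⟨y, W, hW⟩ :=
    hG.exists_walk_forall_mem_support ⟨x, Set.mem_compl_singleton_iff.mpr hxb⟩
  let W' : G.Walk x y := W.map (Embedding.induce _).toHom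
  have hsupp : W'.support = W.support.map (↑) := Walk.support_map _ _
  refine ⟨y, W', ?_, fun v hv => ?_⟩ <;> rw [hsupp, List.mem_map]
  · rintro ⟨⟨_, hv⟩, -, h⟩
    exact hv h
  · exact ⟨⟨v, Set.mem_compl_singleton_iff.mpr hv⟩, hW _, rfl⟩

section

variable [DecidableEq V]

lemma isGPSet_pair (G : SimpleGraph V) (p q : V) : IsGPSet G {p, q} := by
  intro x hx y hy z hz hxy hyz hxz
  simp only [Finset.mem_insert, Finset.mem_singleton] at hx hy hz
  rcases hx with rfl | rfl <;> rcases hy with rfl | rfl <;> rcases hz with rfl | rfl <;>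
    simp_all

lemma legalMove_pair {x y b : V} (hxy : G.Adj x y) (hxb : x ≠ b) (hyb : y ≠ b) :
    LegalMove G {x, b} {y, b} := by
  refine ⟨x, Finset.mem_insert_self x {b}, y, ?_, hxy, ?_, isGPSet_pair G y b⟩
  · simp [hxy.ne', hyb]
  · rw [Finset.erase_insert (by simpa using hxb)]

lemma Walk.exists_legalMove_seq {b : V} :
    ∀ {x y : V} (W : G.Walk x y), b ∉ W.support →
      ∃ (m : ℕ) (f : ℕ → Finset V), f 0 = {x, b} ∧
        (∀ i < m, LegalMove G (f i) (f (i + 1))) ∧ ∀ v ∈ W.support, ∃ i ≤ m, v ∈ f i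
  | x, _, .nil, _ => ⟨0, fun _ => {x, b}, rfl, by simp, by simp⟩
  | x, _, .cons (v := x') hadj W, hb => by
    rw [Walk.support_cons, List.mem_cons, not_or] at hb
    obtain ⟨m, f, hf0, hmoves, hcover⟩ := W.exists_legalMove_seq hb.2
    refine ⟨m + 1, fun | 0 => {x, b} | i + 1 => f i, rfl, ?_, ?_⟩
    · rintro (_ | i) hi
      · have hx'b : x' ≠ b := fun h => hb.2 (h ▸ W.start_mem_support)
        simpa [hf0] using legalMove_pair hadj (Ne.symm hb.1) hx'b
      · exact hmoves i (by omega)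
    · intro v hv
      rcases List.mem_cons.mp hv with rfl | hv
      · exact ⟨0, by omega, by simp⟩
      · obtain ⟨i, hi, hvi⟩ := hcover v hv
        exact ⟨i + 1, by omega, hvi⟩

lemma Connected.exists_isMobileGPSet_card_two [Finite V] [Nontrivial V] (hG : G.Connected) :
    ∃ S : Finset V, IsMobileGPSet G S ∧ S.card = 2 := by
  obtain ⟨b, hb⟩ := hG.exists_connected_induce_compl_singleton_of_finite_nontrivial
  obtain ⟨x, hxb⟩ := exists_ne b
  obtain ⟨y, W, hbW, hW⟩ :=
    exists_walk_forall_mem_support_of_preconnected_induce_compl hxb hb.preconnected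
  obtain ⟨m, f, hf0, hmoves, hcover⟩ := W.exists_legalMove_seq hbW
  refine ⟨{x, b}, ⟨isGPSet_pair G x b, m, f, hf0, hmoves, fun v => ?_⟩,
    Finset.card_pair hxb⟩
  by_cases hvb : v = b
  · exact ⟨0, Nat.zero_le m, by simp [hf0, hvb]⟩
  · exact hcover v (hW v hvb)

def IsMedianOfThree (G : SimpleGraph V) (F : Finset V) (w : V) : Prop :=
  ∃ x ∈ F, ∃ y ∈ F, ∃ z ∈ F, G.Between x w y ∧ G.Between x w z ∧ G.Between y w z

lemma Connected.not_isGPSet_insert_erase_of_isMedianOfThree (hG : G.Connected) {F : Finset V}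
    {w : V} (hwF : w ∉ F) (hF : G.IsMedianOfThree F w) (u : V) :
    ¬ IsGPSet G (insert w (F.erase u)) := by
  intro hgp
  obtain ⟨x, hx, y, hy, z, hz, hxy, hxz, hyz⟩ := hF
  have hne : ∀ {p}, p ∈ F → p ≠ w := fun hp h => hwF (h ▸ hp)
  have hne' : ∀ {p q}, p ∈ F → G.Between p w q → p ≠ q := fun hp h hpq =>
    hne hp (hG.eq_of_between_self (hpq ▸ h)).symm
  have hmem : ∀ {p}, p ∈ F → p ≠ u → p ∈ insert w (F.erase u) := fun hp hpu =>
    Finset.mem_insert_of_mem (Finset.mem_erase.mpr ⟨hpu, hp⟩)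
  have block : ∀ {p q}, p ∈ F → q ∈ F → p ≠ u → q ≠ u → ¬ G.Between p w q :=
    fun hp hq hpu hqu h => hgp _ (hmem hp hpu) w (Finset.mem_insert_self w _) _ (hmem hq hqu)
      (hne hp) (hne hq).symm (hne' hp h) h
  by_cases hxu : x = u
  · subst hxu
    exact block hy hz (hne' hx hxy).symm (hne' hx hxz).symm hyz
  by_cases hyu : y = u
  · subst hyu
    exact block hx hz hxu (hne' hy hyz).symm hxz
  exact block hx hy hxu hyu hxy

lemma IsTree.isMedianOfThree_of_legalMove (hT : T.IsTree) {F F' : Finset V} {w : V}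
    (hwF : w ∉ F) (hF : T.IsMedianOfThree F w) (hmove : LegalMove T F F') :
    w ∉ F' ∧ T.IsMedianOfThree F' w := by
  obtain ⟨u, hu, v, -, huv, rfl, hgp⟩ := hmove
  have hvw : v ≠ w := by
    rintro rfl
    exact hT.connected.not_isGPSet_insert_erase_of_isMedianOfThree hwF hF u hgp
  have huw : u ≠ w := fun h => hwF (h ▸ hu)
  -- the robot at `u` is tracked to `v`, every other robot stays put
  let φ : V → V := fun p => if p = u then v else p
  have hφ_mem : ∀ {p}, p ∈ F → φ p ∈ insert v (F.erase u) := by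
    intro p hp
    by_cases h : p = u <;> simp [φ, h, hp]
  have hφ : ∀ {p q}, p ∈ F → T.Between p w q → T.Between (φ p) w (φ q) := by
    intro p q hp h
    have hpq : p ≠ q := by
      rintro rfl
      exact hwF (hT.connected.eq_of_between_self h ▸ hp)
    by_cases hpu : p = u <;> by_cases hqu : q = u <;> simp only [φ, hpu, hqu, if_true, if_false]
    · exact absurd (hpu.trans hqu.symm) hpq
    · exact (hT.between_of_adj (hpu ▸ h).symm huv huw hvw).symm
    · exact hT.between_of_adj (hqu ▸ h) huv huw hvw
    · exact h
  obtain ⟨x, hx, y, hy, z, hz, hxy, hxz, hyz⟩ := hF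
  refine ⟨?_, φ x, hφ_mem hx, φ y, hφ_mem hy, φ z, hφ_mem hz,
    hφ hx hxy, hφ hx hxz, hφ hy hyz⟩
  simp [hvw.symm, hwF]

lemma not_isMobileGPSet_of_invariant {P : Finset V → Prop} {S : Finset V} (w : V) (hS : P S)
    (hstep : ∀ F F', P F → LegalMove G F F' → P F') (hw : ∀ F, P F → w ∉ F) :
    ¬ IsMobileGPSet G S := by
  rintro ⟨-, m, f, hf0, hmoves, hcover⟩
  have hP : ∀ i ≤ m, P (f i) := by
    intro i hi
    induction i with
    | zero => exact hf0 ▸ hS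
    | succ i ih => exact hstep _ _ (ih (by omega)) (hmoves i (by omega))
  obtain ⟨i, hi, hwi⟩ := hcover w
  exact hw _ (hP i hi) hwi

lemma IsTree.card_le_two_of_isMobileGPSet (hT : T.IsTree) {S : Finset V}
    (hS : IsMobileGPSet T S) : S.card ≤ 2 := by
  by_contra! h
  obtain ⟨a, b, c, ha, hb, hc, hab, hac, hbc⟩ := Finset.two_lt_card_iff.mp h
  obtain ⟨w, hwab, hwac, hwbc⟩ := hT.exists_median a b c
  have hwS : w ∉ S := by
    intro hw
    have hgp := hS.1
    by_cases hwa : w = a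
    · subst hwa
      exact hgp b hb w hw c hc (Ne.symm hab) hac hbc hwbc
    by_cases hwb : w = b
    · subst hwb
      exact hgp a ha w hw c hc hab hbc hac hwac
    by_cases hwc : w = c
    · subst hwc
      exact hgp a ha w hw b hb hac (Ne.symm hbc) hab hwab
    exact hgp a ha w hw b hb (Ne.symm hwa) hwb hab hwab
  exact not_isMobileGPSet_of_invariant (P := fun F => w ∉ F ∧ T.IsMedianOfThree F w) w
    ⟨hwS, a, ha, b, hb, c, hc, hwab, hwac, hwbc⟩
    (fun _ _ hF hmove => hT.isMedianOfThree_of_legalMove hF.1 hF.2 hmove) (fun _ hF => hF.1) hS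

end

end SimpleGraph

/-- If `T` is a tree with at least 2 vertices, then `mob(T) = 2`. -/
theorem stmt11 {V : Type*} [Fintype V] [DecidableEq V] (T : SimpleGraph V)
    (hT : T.IsTree) (hn : 2 ≤ Fintype.card V) : mob T = 2 := by
  have : Nontrivial V := Fintype.one_lt_card_iff_nontrivial.mp hn
  obtain ⟨S, hS, hcard⟩ := hT.connected.exists_isMobileGPSet_card_two
  refine IsGreatest.csSup_eq ⟨⟨S, hS, hcard⟩, ?_⟩
  rintro n ⟨S', hS', rfl⟩
  exact hT.card_le_two_of_isMobileGPSet hS'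
end
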